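/- Let b > 0. Then there exists ε₀ > 0 such that for every ε ∈ (0, ε₀), the 2×2 real symmetric matrices M_ε(P) and M_ε(−P), where P = [[1, −b],[0, 1]], are both positive definite (so each has signature 2). -/

import Mathlib

open Matrix

/-- `M_ε(P) = Pᵀ S⁻(ε) P + S⁺(ε)` for `2 × 2` matrices, where
`S⁻(ε) = [[sin 2ε, −cos 2ε], [−cos 2ε, −sin 2ε]]` and
`S⁺(ε) = [[sin 2ε, cos 2ε], [cos 2ε, −sin 2ε]]`. -/
noncomputable def Meps2 (ε : ℝ) (P : Matrix (Fin 2) (Fin 2) ℝ) : Matrix (Fin 2) (Fin 2) ℝ :=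
  Pᵀ * !![Real.sin (2 * ε), -Real.cos (2 * ε); -Real.cos (2 * ε), -Real.sin (2 * ε)] * P
    + !![Real.sin (2 * ε), Real.cos (2 * ε); Real.cos (2 * ε), -Real.sin (2 * ε)]

/-! Proof idea: `M_ε(P)` depends on `P` only through the quadratic expression `Pᵀ S⁻(ε) P`,
so `M_ε(−P) = M_ε(P)`. For the shear `P = [[1, −b], [0, 1]]`, writing `s = sin 2ε`, `c = cos 2ε`,
one computes `M_ε(P) = [[2s, −bs], [−bs, b²s + 2bc − 2s]]`, whose determinant is
`s (b²s + 4bc − 4s)`. As `ε → 0⁺` we have `s > 0` and `b²s + 4bc − 4s → 4b > 0`, so both leading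
minors are positive for small `ε`. -/

open Filter Topology Real

theorem Matrix.posDef_fin_two_of_pos_of_det_pos {a h d : ℝ} (ha : 0 < a)
    (hdet : 0 < a * d - h ^ 2) : (!![a, h; h, d]).PosDef := by
  rw [Matrix.posDef_iff_dotProduct_mulVec]
  refine ⟨by ext i j; fin_cases i <;> fin_cases j <;> rfl, fun x hx => ?_⟩
  simp only [dotProduct, mulVec, Fin.sum_univ_two, cons_val_zero, cons_val_one, of_apply,
    cons_val', empty_val', cons_val_fin_one, Pi.star_apply, star_trivial]
  by_cases hx1 : x 1 = 0
  · have hx0 : x 0 ≠ 0 := fun hx0 => hx (funext fun i => by fin_cases i <;> assumption)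
    have : 0 < x 0 ^ 2 := by positivity
    simp only [hx1]
    nlinarith
  · -- `a · xᵀMx = (a x₀ + h x₁)² + (ad − h²) x₁²`
    have : 0 < x 1 ^ 2 := by positivity
    nlinarith [sq_nonneg (a * x 0 + h * x 1)]

theorem Meps2_neg (ε : ℝ) (P : Matrix (Fin 2) (Fin 2) ℝ) : Meps2 ε (-P) = Meps2 ε P := by
  simp only [Meps2, transpose_neg, neg_mul, mul_neg, neg_neg]

theorem Meps2_shear (b ε : ℝ) :
    Meps2 ε !![1, -b; 0, 1] =
      !![2 * sin (2 * ε), -b * sin (2 * ε);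
         -b * sin (2 * ε), b ^ 2 * sin (2 * ε) + 2 * b * cos (2 * ε) - 2 * sin (2 * ε)] := by
  ext i j
  fin_cases i <;> fin_cases j <;>
    simp [Meps2, mul_apply, Fin.sum_univ_two] <;> ring

theorem posDef_Meps2_shear {b ε : ℝ} (hs : 0 < sin (2 * ε))
    (hdet : 0 < b ^ 2 * sin (2 * ε) + 4 * b * cos (2 * ε) - 4 * sin (2 * ε)) :
    (Meps2 ε !![1, -b; 0, 1]).PosDef := by
  rw [Meps2_shear]
  refine posDef_fin_two_of_pos_of_det_pos (by positivity) ?_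
  nlinarith [mul_pos hs hdet]

theorem stmt_16 (b : ℝ) (hb : 0 < b) :
    ∃ ε₀ > (0 : ℝ), ∀ ε : ℝ, 0 < ε → ε < ε₀ →
      (Meps2 ε !![1, -b; 0, 1]).PosDef ∧ (Meps2 ε (-!![1, -b; 0, 1])).PosDef := by
  have hsin : ∀ᶠ ε in 𝓝[>] (0 : ℝ), 0 < sin (2 * ε) := by
    filter_upwards [Ioo_mem_nhdsGT (by positivity : (0 : ℝ) < π / 2)] with ε hε
    exact sin_pos_of_pos_of_lt_pi (by linarith [hε.1]) (by linarith [hε.2])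
  have hdet : ∀ᶠ ε in 𝓝 (0 : ℝ),
      0 < b ^ 2 * sin (2 * ε) + 4 * b * cos (2 * ε) - 4 * sin (2 * ε) := by
    have hcont : Continuous fun ε : ℝ =>
        b ^ 2 * sin (2 * ε) + 4 * b * cos (2 * ε) - 4 * sin (2 * ε) := by fun_prop
    exact hcont.continuousAt.eventually (lt_mem_nhds (by simpa using hb))
  obtain ⟨ε₀, hε₀, h⟩ :=
    (nhdsGT_basis (0 : ℝ)).eventually_iff.mp (hsin.and (nhdsWithin_le_nhds hdet))
  refine ⟨ε₀, hε₀, fun ε hε hεε₀ => ?_⟩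
  obtain ⟨hs, hd⟩ := h ⟨hε, hεε₀⟩
  rw [Meps2_neg]
  exact ⟨posDef_Meps2_shear hs hd, posDef_Meps2_shear hs hd⟩
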